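/- arXiv:2505.05981 — 2 statements merged into one kernel-verified Lean document; each statement's English description precedes it below -/
import Mathlib

section
/- Let w_⋆ be the product of all upper-triangular transvections T_{(jk)} (1 ≤ j < k ≤ q) multiplied on the left in the lexicographic order ≺ on pairs (j,k) (so the factor with the ≺-smallest index appears rightmost). Then every upper unitriangular matrix A over F_2 equals the subword of w_⋆ obtained by keeping exactly those factors T_{(jk)} with A_{jk} = 1. -/
/-!
Each factor is `T_{(jk)} = 1 + E_{jk}`. Along the word the row indices `j` weakly decrease while
`j < k`, so the column index of any factor exceeds the row index of every factor to its right, and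
all products `E_{jk} E_{j'k'}` taken in word order vanish. Hence every subword multiplies out to `1`
plus the sum of its `E_{jk}`, and keeping exactly the positions where `A` has a `1` above the
diagonal gives back `A`.
-/

/-- The list of all pairs `(j, k)` with `j < k` in `Fin q`, listed in *decreasing*
lexicographic order (so that the `≺`-smallest pair appears last, i.e. the corresponding
factor appears rightmost in a product). -/
def lexPairsList (q : ℕ) : List (Fin q × Fin q) :=
  (List.finRange q).reverse.flatMap fun j =>
    (((List.finRange q).filter fun k => decide (j < k)).reverse.map fun k => (j, k))

open Matrix

section
variable {n R : Type*} [DecidableEq n] [CommRing R]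

theorem list_prod_map_transvection_eq_one_add_sum [Fintype n] {l : List (n × n)}
    (hl : l.Pairwise fun p p' => p.2 ≠ p'.1) (c : R) :
    (l.map fun p => transvection p.1 p.2 c).prod = 1 + (l.map fun p => single p.1 p.2 c).sum := by
  induction l with
  | nil => simp
  | cons p l ih =>
    obtain ⟨hp, hl⟩ := List.pairwise_cons.1 hl
    have hzero : single p.1 p.2 c * (l.map fun p => single p.1 p.2 c).sum = 0 := by
      rw [← List.sum_map_mul_left]
      refine List.sum_eq_zero fun _ hmem => ?_
      obtain ⟨p', hp', rfl⟩ := List.mem_map.1 hmem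
      exact single_mul_single_of_ne c p.1 p.2 p'.1 (hp p' hp') c
    rw [List.map_cons, List.prod_cons, ih hl, transvection, add_mul, one_mul, mul_add, mul_one,
      hzero, List.map_cons, List.sum_cons]
    abel

theorem list_sum_map_single_apply {l : List (n × n)} (hl : l.Nodup) (c : R) (i k : n) :
    (l.map fun p => single p.1 p.2 c).sum i k = if (i, k) ∈ l then c else 0 := by
  rw [← List.sum_toFinset _ hl, Matrix.sum_apply]
  simp [single_apply, ← Prod.ext_iff (y := (i, k))]

end

theorem mem_lexPairsList {q : ℕ} {p : Fin q × Fin q} : p ∈ lexPairsList q ↔ p.1 < p.2 := by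
  obtain ⟨j, k⟩ := p
  simp [lexPairsList, eq_comm]

theorem pairwise_toLex_gt_lexPairsList (q : ℕ) :
    (lexPairsList q).Pairwise fun p p' => toLex p' < toLex p := by
  rw [lexPairsList, List.pairwise_flatMap]
  refine ⟨fun j _ => ?_, ?_⟩
  · rw [List.pairwise_map, List.pairwise_reverse]
    refine ((List.pairwise_lt_finRange q).filter _).imp fun {k k'} h => ?_
    exact Prod.Lex.toLex_lt_toLex.2 (Or.inr ⟨rfl, h⟩)
  · refine (List.pairwise_reverse.2 (List.pairwise_lt_finRange q)).imp fun h => ?_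
    simp only [List.mem_map]
    rintro _ ⟨k, -, rfl⟩ _ ⟨k', -, rfl⟩
    exact Prod.Lex.toLex_lt_toLex.2 (Or.inl h)

theorem nodup_lexPairsList (q : ℕ) : (lexPairsList q).Nodup :=
  (pairwise_toLex_gt_lexPairsList q).imp fun h => (ne_of_lt h).symm ∘ congrArg toLex

theorem pairwise_snd_ne_fst_lexPairsList (q : ℕ) :
    (lexPairsList q).Pairwise fun p p' => p.2 ≠ p'.1 := by
  refine (pairwise_toLex_gt_lexPairsList q).imp_of_mem fun hp _ h => ?_
  exact ((Prod.Lex.toLex_lt_toLex'.1 h).1.trans_lt (mem_lexPairsList.1 hp)).ne'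

/-- Let `w⋆` be the product of all upper-triangular transvections `T_{(jk)}` (`j < k`)
multiplied on the left in lexicographic order `≺` on pairs `(j,k)` (so the factor with
the `≺`-smallest index appears rightmost). Then every upper unitriangular matrix `A`
over `F₂` equals the subword of `w⋆` obtained by keeping exactly those factors
`T_{(jk)}` with `A j k = 1`. -/
theorem unitriangular_eq_subword_of_lex_transvection_word (q : ℕ)
    (A : Matrix (Fin q) (Fin q) (ZMod 2))
    (hdiag : ∀ i, A i i = 1) (hlow : ∀ i j : Fin q, j < i → A i j = 0) :
    A = (((lexPairsList q).filter fun p => decide (A p.1 p.2 = 1)).map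
          fun p => Matrix.transvection p.1 p.2 (1 : ZMod 2)).prod := by
  rw [list_prod_map_transvection_eq_one_add_sum ((pairwise_snd_ne_fst_lexPairsList q).filter _)]
  ext i k
  rw [Matrix.add_apply, list_sum_map_single_apply ((nodup_lexPairsList q).filter _)]
  simp only [List.mem_filter, mem_lexPairsList, decide_eq_true_eq]
  rcases lt_trichotomy i k with h | rfl | h
  · simp only [one_apply_ne h.ne, h, true_and, zero_add]
    exact (show ∀ x : ZMod 2, x = if x = 1 then 1 else 0 by decide) _
  · simp [hdiag]
  · simp [one_apply_ne h.ne', h.not_gt, hlow i k h]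
end

section
/- Let M be an upper unitriangular matrix over F_2 and (p,r) a pair with p < r such that M_{jk} = 0 for all pairs (j,k) with (p,r) ≺ (j,k) in lexicographic order, and M_{pr} = 0. Then T_{(pr)} M equals M with the (p,r) entry changed from 0 to 1 and all other entries unchanged. -/
/-- Let `M` be an upper unitriangular matrix over `F₂` and `(p, r)` a pair with `p < r`
such that `M j k = 0` for all pairs `(j, k)` (with `j < k`) that are lexicographically
strictly larger than `(p, r)`, and `M p r = 0`. Then `T_{(pr)} * M` equals `M` with the
`(p, r)` entry changed from `0` to `1` and all other entries unchanged. -/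
theorem transvection_mul_unitriangular (q : ℕ) (M : Matrix (Fin q) (Fin q) (ZMod 2))
    (p r : Fin q) (hpr : p < r)
    (hdiag : ∀ i, M i i = 1) (hlow : ∀ i j : Fin q, j < i → M i j = 0)
    (hlex : ∀ j k : Fin q, j < k → (p < j ∨ (p = j ∧ r < k)) → M j k = 0)
    (hMpr : M p r = 0) :
    ∀ i j : Fin q, (Matrix.transvection p r (1 : ZMod 2) * M) i j =
      if i = p ∧ j = r then 1 else M i j := by
  intro i j
  rcases eq_or_ne i p with rfl | hi
  · rw [Matrix.transvection_mul_apply_same (i := i) (j := r) j (1 : ZMod 2) M]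
    rcases eq_or_ne j r with rfl | hj
    · simp [hMpr, hdiag]
    · have hrj : M r j = 0 := by
        rcases lt_or_gt_of_ne hj with h | h
        · exact hlow r j h
        · exact hlex r j h (Or.inl hpr)
      simp [hj, hrj]
  · rw [Matrix.transvection_mul_apply_of_ne (i := p) (j := r) i j hi (1 : ZMod 2) M]
    simp [hi]
end
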